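/- Two partial expressions e and e' are n-extensionally equivalent if and only if their n-extensional semantics coincide, i.e. e ∼_n e' ⇔ ⟦e⟧_{ext_n} = ⟦e'⟧_{ext_n}. -/

import Mathlib

/-- A signature: function symbols and constructor symbols, each with an arity. -/
structure Sig where
  FS : Type
  CS : Type
  arityF : FS → ℕ
  arityC : CS → ℕ

/-- Applicative partial expressions over a signature.  Variables are natural
numbers and `bot` is the distinguished 0-ary constructor `⊥`. -/
inductive Exp (σ : Sig) : Type where
  | var : ℕ → Exp σ
  | fn : σ.FS → Exp σ
  | cn : σ.CS → Exp σ
  | bot : Exp σ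
  | app : Exp σ → Exp σ → Exp σ

variable {σ : Sig}

/-- `applyList e [e1, …, en]` is the curried application `e e1 … en`. -/
def applyList (e : Exp σ) (es : List (Exp σ)) : Exp σ := es.foldl Exp.app e

/-- Partial patterns `Pat_⊥`. -/
inductive IsPPat : Exp σ → Prop where
  | var (x : ℕ) : IsPPat (Exp.var x)
  | bot : IsPPat (Exp.bot : Exp σ)
  | capp (c : σ.CS) (ts : List (Exp σ)) (har : ts.length ≤ σ.arityC c)
      (hts : ∀ t ∈ ts, IsPPat t) : IsPPat (applyList (Exp.cn c) ts)
  | fapp (f : σ.FS) (ts : List (Exp σ)) (har : ts.length < σ.arityF f)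
      (hts : ∀ t ∈ ts, IsPPat t) : IsPPat (applyList (Exp.fn f) ts)

/-- The constructor `⊥` does not occur in the expression. -/
def BotFree : Exp σ → Prop
  | .bot => False
  | .app a b => BotFree a ∧ BotFree b
  | _ => True

/-- Total patterns `Pat`. -/
def IsPat (t : Exp σ) : Prop := IsPPat t ∧ BotFree t

/-- First-order patterns `FOPat`. -/
inductive IsFOPat : Exp σ → Prop where
  | var (x : ℕ) : IsFOPat (Exp.var x)
  | capp (c : σ.CS) (ts : List (Exp σ)) (har : ts.length = σ.arityC c)
      (hts : ∀ t ∈ ts, IsFOPat t) : IsFOPat (applyList (Exp.cn c) ts)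

/-- The list of occurrences of variables in an expression. -/
def occVars : Exp σ → List ℕ
  | .var x => [x]
  | .app a b => occVars a ++ occVars b
  | _ => []

/-- Applying a substitution to an expression. -/
def subst (θ : ℕ → Exp σ) : Exp σ → Exp σ
  | .var x => θ x
  | .fn f => .fn f
  | .cn c => .cn c
  | .bot => .bot
  | .app a b => .app (subst θ a) (subst θ b)

/-- Partial-pattern substitutions `PSubst_⊥`. -/
def PSub (θ : ℕ → Exp σ) : Prop := ∀ x, IsPPat (θ x)

/-- A program rule `f t1 … tn → r` (the left-hand side is `f` applied to `lhs`). -/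
structure Rule (σ : Sig) where
  fn : σ.FS
  lhs : List (Exp σ)
  rhs : Exp σ

/-- Well-formedness of a rule: `f` is applied to as many arguments as its arity,
the arguments form a linear tuple of total patterns. -/
def Rule.WF (r : Rule σ) : Prop :=
  r.lhs.length = σ.arityF r.fn ∧ (∀ t ∈ r.lhs, IsPat t) ∧
    (r.lhs.flatMap occVars).Nodup

/-- The rule has no extra variables: all variables of the right-hand side occur
in the left-hand side. -/
def Rule.NoExtra (r : Rule σ) : Prop :=
  ∀ x ∈ occVars r.rhs, x ∈ r.lhs.flatMap occVars

abbrev Program (σ : Sig) := Set (Rule σ)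

/-- A program without extra variables, all whose rules are well formed. -/
def WFProg (P : Program σ) : Prop := ∀ r ∈ P, r.WF ∧ r.NoExtra

/-- `h ∈ Σ` (a function symbol, a constructor symbol, or `⊥`). -/
def IsSymb : Exp σ → Prop
  | .fn _ => True
  | .cn _ => True
  | .bot => True
  | _ => False

/-- HOCRWL derivation trees for statements `e ⇒ t`, with rules
(B), (RR), (DC) and (OR). -/
inductive DTree (P : Program σ) : Exp σ → Exp σ → Type where
  | bot (e : Exp σ) : DTree P e Exp.bot
  | rr (x : ℕ) : DTree P (Exp.var x) (Exp.var x)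
  | dc (h : Exp σ) (es ts : List (Exp σ)) (hsym : IsSymb h)
      (hlen : es.length = ts.length) (hpat : IsPPat (applyList h ts))
      (ds : ∀ p ∈ es.zip ts, DTree P p.1 p.2) :
      DTree P (applyList h es) (applyList h ts)
  | opr (r : Rule σ) (hr : r ∈ P) (θ : ℕ → Exp σ) (hθ : PSub θ)
      (es as : List (Exp σ)) (t : Exp σ) (hlen : es.length = r.lhs.length)
      (ds : ∀ p ∈ es.zip (r.lhs.map (subst θ)), DTree P p.1 p.2)
      (d : DTree P (applyList (subst θ r.rhs) as) t) :
      DTree P (applyList (Exp.fn r.fn) (es ++ as)) t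

/-- `P ⊢ e ⇒ t` is derivable in the HOCRWL proof calculus. -/
def Deriv (P : Program σ) (e t : Exp σ) : Prop := Nonempty (DTree P e t)

/-- The HOCRWL denotation `⟦e⟧^P = { t ∈ Pat_⊥ | P ⊢ e ⇒ t }`. -/
def den (P : Program σ) (e : Exp σ) : Set (Exp σ) := {t | IsPPat t ∧ Deriv P e t}

/-- Observations: total patterns in the denotation. -/
def Obs (P : Program σ) (e : Exp σ) : Set (Exp σ) := {t | t ∈ den P e ∧ BotFree t}

/-- First-order observations: first-order patterns in the denotation. -/
def ObsFO (P : Program σ) (e : Exp σ) : Set (Exp σ) := {t | t ∈ den P e ∧ IsFOPat t}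

/-- Contexts `C ::= [ ] | C e | e C`. -/
inductive Cntxt (σ : Sig) : Type where
  | hole : Cntxt σ
  | appL : Cntxt σ → Exp σ → Cntxt σ
  | appR : Exp σ → Cntxt σ → Cntxt σ

/-- Filling the hole of a context with an expression. -/
def Cntxt.fill : Cntxt σ → Exp σ → Exp σ
  | .hole, e => e
  | .appL C e', e => .app (C.fill e) e'
  | .appR e' C, e => .app e' (C.fill e)

/-- Function symbols occurring in an expression. -/
def expFS : Exp σ → Set σ.FS
  | .fn f => {f}
  | .app a b => expFS a ∪ expFS b
  | _ => ∅

/-- Function symbols occurring in a rule. -/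
def ruleFS (r : Rule σ) : Set σ.FS :=
  insert r.fn ((⋃ t ∈ r.lhs, expFS t) ∪ expFS r.rhs)

/-- Function symbols occurring in a program. -/
def progFS (P : Program σ) : Set σ.FS := ⋃ r ∈ P, ruleFS r

/-- Function symbols defined by a program (roots of left-hand sides). -/
def defs (P : Program σ) : Set σ.FS := Rule.fn '' P

/-- `P'` is a safe extension of `(P, e)`: `P' = P ⊎ P''` where `P''` defines no
function symbol occurring in `P` or in `e`. -/
def SafeExt (P P' : Program σ) (e : Exp σ) : Prop :=
  ∃ P'' : Program σ, P' = P ∪ P'' ∧ Disjoint P P'' ∧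
    Disjoint (defs P'') (expFS e ∪ progFS P)

/-- `e ∼ₙ e'` : `n`-extensional equivalence. -/
def ExtEquiv (P : Program σ) (n : ℕ) (e e' : Exp σ) : Prop :=
  ∀ es : List (Exp σ), es.length = n →
    den P (applyList e es) = den P (applyList e' es)

/-- The `n`-extensional semantics `⟦e⟧_{ext_n} = λ t1 … λ tn. ⟦e t1 … tn⟧`,
a function on `n`-tuples of partial patterns. -/
def extSem (P : Program σ) (n : ℕ) (e : Exp σ) :
    {ts : List (Exp σ) // ts.length = n ∧ ∀ t ∈ ts, IsPPat t} → Set (Exp σ) :=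
  fun ts => den P (applyList e ts.1)

/-!
A derivation of `e e₁ … eₙ ⇒ t` consults each argument `eᵢ` only through a single partial
pattern `tᵢ` with `eᵢ ⇒ tᵢ`, and any other expression deriving `tᵢ` may take its place.
With reflexivity of `⇒` on partial patterns and its transitivity
(which holds because left-hand sides have full arity, so that (OR) never applies to a partial
pattern), this gives `e e₁ … eₙ ⇒ t` iff `e t₁ … tₙ ⇒ t` for some partial patterns `tᵢ` with
`eᵢ ⇒ tᵢ`. Hence `⟦e e₁ … eₙ⟧` depends on `e` only through `⟦e⟧_{ext_n}`.
-/

namespace List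

variable {α β γ : Type*}

theorem append_eq_append_cons_cases {l₁ l₂ l₃ l₄ : List α} {a : α}
    (h : l₁ ++ l₂ = l₃ ++ a :: l₄) :
    (∃ l, l₃ = l₁ ++ l ∧ l₂ = l ++ a :: l₄) ∨ ∃ l, l₁ = l₃ ++ a :: l ∧ l₄ = l ++ l₂ := by
  rcases append_eq_append_iff.1 h with ⟨l, h₃, h₂⟩ | ⟨l, h₁, h'⟩
  · exact .inl ⟨l, h₃, h₂⟩
  · rcases cons_eq_append_iff.1 h' with ⟨rfl, rfl⟩ | ⟨l', rfl, h₄⟩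
    · exact .inl ⟨[], by simpa using h₁.symm, rfl⟩
    · exact .inr ⟨l', h₁, h₄⟩

namespace Forall₂

variable {R : α → β → Prop}

theorem forall_mem_right {p : β → Prop} (hR : ∀ a b, R a b → p b) {l₁ : List α} {l₂ : List β}
    (h : Forall₂ R l₁ l₂) : ∀ b ∈ l₂, p b := by
  induction h with
  | nil => simp
  | cons hab _ ih => exact forall_mem_cons.2 ⟨hR _ _ hab, ih⟩

theorem comp {S : β → γ → Prop} {T : α → γ → Prop} (H : ∀ a b c, R a b → S b c → T a c)
    {l₁ : List α} {l₂ : List β} {l₃ : List γ} (h₁ : Forall₂ R l₁ l₂) (h₂ : Forall₂ S l₂ l₃) :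
    Forall₂ T l₁ l₃ := by
  induction h₁ generalizing l₃ with
  | nil => cases h₂; exact .nil
  | cons hab _ ih =>
    cases h₂ with
    | cons hbc h₂ => exact .cons (H _ _ _ hab hbc) (ih h₂)

theorem exists_rel_replace {l₁ l₂ : List α} {a : α} {l : List β}
    (h : Forall₂ R (l₁ ++ a :: l₂) l) :
    ∃ b, R a b ∧ ∀ a', R a' b → Forall₂ R (l₁ ++ a' :: l₂) l := by
  induction l₁ generalizing l with
  | nil =>
    obtain ⟨b, l', hab, hl', rfl⟩ := forall₂_cons_left_iff.1 h
    exact ⟨b, hab, fun a' ha' => .cons ha' hl'⟩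
  | cons x l₁ ih =>
    obtain ⟨b, l', hxb, hl', rfl⟩ := forall₂_cons_left_iff.1 h
    obtain ⟨c, hac, hreplace⟩ := ih hl'
    exact ⟨c, hac, fun a' ha' => .cons hxb (hreplace a' ha')⟩

end Forall₂

end List

variable {σ : Sig}

theorem applyList_append (e : Exp σ) (l l' : List (Exp σ)) :
    applyList e (l ++ l') = applyList (applyList e l) l' :=
  List.foldl_append

theorem isSymb_fn (f : σ.FS) : IsSymb (Exp.fn f : Exp σ) := trivial

theorem isSymb_cn (c : σ.CS) : IsSymb (Exp.cn c : Exp σ) := trivial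

theorem IsSymb.ne_app {h : Exp σ} (hs : IsSymb h) (a b : Exp σ) : h ≠ .app a b := by
  rintro rfl
  exact hs

theorem exists_eq_applyList_of_applyList_eq {h u : Exp σ} (hh : ∀ a b, h ≠ .app a b)
    {es ws : List (Exp σ)} (heq : applyList h es = applyList u ws) :
    ∃ as, u = applyList h as ∧ es = as ++ ws := by
  induction ws generalizing u with
  | nil => exact ⟨es, heq.symm, (List.append_nil es).symm⟩
  | cons w ws ih =>
    obtain ⟨as, hu, rfl⟩ := ih heq
    rcases as.eq_nil_or_concat with rfl | ⟨as, a, rfl⟩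
    · exact absurd hu.symm (hh u w)
    · rw [List.concat_eq_append, applyList_append] at hu
      obtain ⟨rfl, rfl⟩ := Exp.app.inj hu
      exact ⟨as, rfl, by simp⟩

theorem eq_nil_of_applyList_eq {x e : Exp σ} (hx : ∀ a b, x ≠ .app a b) {l : List (Exp σ)}
    (heq : applyList e l = x) : l = [] ∧ e = x := by
  obtain ⟨as, rfl, h⟩ := exists_eq_applyList_of_applyList_eq (es := []) hx heq.symm
  obtain ⟨rfl, rfl⟩ := List.append_eq_nil_iff.1 h.symm
  exact ⟨rfl, rfl⟩

theorem applyList_symb_inj {h h' : Exp σ} (hs : IsSymb h) (hs' : IsSymb h')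
    {es es' : List (Exp σ)} (heq : applyList h es = applyList h' es') : h = h' ∧ es = es' := by
  obtain ⟨as, rfl, rfl⟩ := exists_eq_applyList_of_applyList_eq hs.ne_app heq
  obtain ⟨rfl, -⟩ := eq_nil_of_applyList_eq hs'.ne_app rfl
  exact ⟨rfl, rfl⟩

namespace IsPPat

theorem length_lt_arityF {f : σ.FS} {ts : List (Exp σ)}
    (hp : IsPPat (applyList (.fn f) ts)) : ts.length < σ.arityF f := by
  generalize he : applyList (.fn f) ts = E at hp
  cases hp with
  | var x => cases (eq_nil_of_applyList_eq (by simp) he).2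
  | bot => cases (eq_nil_of_applyList_eq (by simp) he).2
  | capp c ts' _ _ => cases (applyList_symb_inj (isSymb_fn f) (isSymb_cn c) he).1
  | fapp f' ts' har _ =>
    obtain ⟨h, rfl⟩ := applyList_symb_inj (isSymb_fn f) (isSymb_fn f') he
    cases h
    exact har

end IsPPat

namespace Deriv

variable {P : Program σ}

theorem bot (e : Exp σ) : Deriv P e .bot := ⟨.bot e⟩

theorem dc {h : Exp σ} (hs : IsSymb h) {es ts : List (Exp σ)} (hpat : IsPPat (applyList h ts))
    (hds : List.Forall₂ (Deriv P) es ts) : Deriv P (applyList h es) (applyList h ts) :=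
  ⟨.dc h es ts hs hds.length_eq hpat fun _ hp => (List.forall₂_zip hds hp).some⟩

theorem opr {r : Rule σ} (hr : r ∈ P) {θ : ℕ → Exp σ} (hθ : PSub θ) {es as : List (Exp σ)}
    {t : Exp σ} (hds : List.Forall₂ (Deriv P) es (r.lhs.map (subst θ)))
    (hd : Deriv P (applyList (subst θ r.rhs) as) t) :
    Deriv P (applyList (.fn r.fn) (es ++ as)) t :=
  ⟨.opr r hr θ hθ es as t (by simpa using hds.length_eq)
    (fun _ hp => (List.forall₂_zip hds hp).some) hd.some⟩

-- The motive mentions the derivation only so that `induction h using Deriv.induction` accepts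
-- this eliminator.
theorem induction {motive : ∀ e t, Deriv P e t → Prop}
    (bot : ∀ e, motive e .bot (Deriv.bot e))
    (rr : ∀ x, motive (.var x) (.var x) ⟨.rr x⟩)
    (dc : ∀ h es ts (hs : IsSymb h) (hpat : IsPPat (applyList h ts))
      (hds : List.Forall₂ (fun e t => ∃ hd : Deriv P e t, motive e t hd) es ts),
      motive _ _ (Deriv.dc hs hpat (hds.imp fun _ _ => Exists.fst)))
    (opr : ∀ r (hr : r ∈ P) θ (hθ : PSub θ) es as t
      (hds : List.Forall₂ (Deriv P) es (r.lhs.map (subst θ)))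
      (hd : Deriv P (applyList (subst θ r.rhs) as) t),
      motive _ _ hd → motive _ _ (Deriv.opr hr hθ hds hd))
    {e t : Exp σ} (h : Deriv P e t) : motive e t h := by
  obtain ⟨d⟩ := h
  induction d with
  | bot e => exact bot e
  | rr x => exact rr x
  | dc h es ts hs hlen hpat ds ih =>
    exact dc h es ts hs hpat (List.forall₂_iff_zip.2 ⟨hlen, fun hp => ⟨⟨ds _ hp⟩, ih _ hp⟩⟩)
  | opr r hr θ hθ es as t hlen ds d _ ih =>
    exact opr r hr θ hθ es as t
      (List.forall₂_iff_zip.2 ⟨by simpa using hlen, fun hp => ⟨ds _ hp⟩⟩) ⟨d⟩ ih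

theorem isPPat {e t : Exp σ} (h : Deriv P e t) : IsPPat t := by
  induction h using Deriv.induction with
  | bot => exact .bot
  | rr x => exact .var x
  | dc _ _ _ _ hpat _ => exact hpat
  | opr _ _ _ _ _ _ _ _ _ ih => exact ih

theorem refl {s : Exp σ} (hs : IsPPat s) : Deriv P s s := by
  induction hs with
  | var x => exact ⟨.rr x⟩
  | bot => exact bot _
  | capp c ts har hts ih => exact dc (isSymb_cn c) (.capp c ts har hts) (List.forall₂_same.2 ih)
  | fapp f ts har hts ih => exact dc (isSymb_fn f) (.fapp f ts har hts) (List.forall₂_same.2 ih)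

theorem eq_bot_of_bot {t : Exp σ} (h : Deriv P .bot t) : t = .bot := by
  obtain ⟨e, he, h⟩ : ∃ e, e = .bot ∧ Deriv P e t := ⟨_, rfl, h⟩
  induction h using Deriv.induction with
  | bot => rfl
  | rr x => cases he
  | dc h es ts hs _ hds =>
    obtain ⟨rfl, rfl⟩ := eq_nil_of_applyList_eq (by simp) he
    rw [List.forall₂_nil_left_iff.1 hds]
    rfl
  | opr r _ _ _ es as _ _ _ _ => cases (eq_nil_of_applyList_eq (by simp) he).2

theorem of_applyList_symb (hP : ∀ r ∈ P, r.lhs.length = σ.arityF r.fn) {h : Exp σ}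
    (hs : IsSymb h) {ts : List (Exp σ)} {t : Exp σ} (hpat : IsPPat (applyList h ts))
    (hd : Deriv P (applyList h ts) t) :
    t = .bot ∨ ∃ ts', t = applyList h ts' ∧ List.Forall₂ (Deriv P) ts ts' := by
  generalize he : applyList h ts = s at hd
  induction hd using Deriv.induction with
  | bot => exact .inl rfl
  | rr x =>
    obtain ⟨-, rfl⟩ := eq_nil_of_applyList_eq (by simp) he
    cases hs
  | dc h' es ts' hs' _ hds =>
    obtain ⟨rfl, rfl⟩ := applyList_symb_inj hs hs' he
    exact .inr ⟨ts', rfl, hds.imp fun _ _ => Exists.fst⟩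
  | opr r hr θ _ es as _ hds _ _ =>
    obtain ⟨rfl, rfl⟩ := applyList_symb_inj hs (isSymb_fn r.fn) he
    have hlt := hpat.length_lt_arityF
    have hlen := hds.length_eq
    simp only [List.length_append, List.length_map, hP r hr] at hlt hlen
    omega

theorem trans (hP : ∀ r ∈ P, r.lhs.length = σ.arityF r.fn) {e s t : Exp σ}
    (h₁ : Deriv P e s) (h₂ : Deriv P s t) : Deriv P e t := by
  induction h₁ using Deriv.induction generalizing t with
  | bot e => rw [eq_bot_of_bot h₂]; exact bot e
  | rr x => exact h₂
  | dc h es ts hs hpat hds =>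
    obtain rfl | ⟨ts', rfl, hts'⟩ := of_applyList_symb hP hs hpat h₂
    · exact bot _
    · exact dc hs h₂.isPPat (hds.comp (fun _ _ _ hab hbc => hab.snd hbc) hts')
  | opr r hr θ hθ es as _ hds _ ih => exact opr hr hθ hds (ih h₂)

theorem exists_arg_approx {u v t : Exp σ} {ws : List (Exp σ)}
    (h : Deriv P (applyList u (v :: ws)) t) :
    ∃ s, Deriv P v s ∧ ∀ y, Deriv P y s → Deriv P (applyList u (y :: ws)) t := by
  generalize he : applyList u (v :: ws) = c at h
  induction h using Deriv.induction generalizing u v ws with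
  | bot => exact ⟨.bot, bot v, fun _ _ => bot _⟩
  | rr x => cases (eq_nil_of_applyList_eq (by simp) he).1
  | dc h es ts hs hpat hds =>
    obtain ⟨as, rfl, rfl⟩ := exists_eq_applyList_of_applyList_eq hs.ne_app he.symm
    obtain ⟨s, hvs, hreplace⟩ := (hds.imp fun _ _ => Exists.fst).exists_rel_replace
    exact ⟨s, hvs, fun y hy => by
      simpa [applyList_append] using dc hs hpat (hreplace y hy)⟩
  | opr r hr θ hθ es as t hds hd ih =>
    obtain ⟨bs, rfl, hsplit⟩ :=
      exists_eq_applyList_of_applyList_eq (h := .fn r.fn) (by simp) he.symm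
    rcases List.append_eq_append_cons_cases hsplit with ⟨l, rfl, rfl⟩ | ⟨l, rfl, rfl⟩
    · -- `v` lies beyond the arguments of the rule and is passed on to its right-hand side
      obtain ⟨s, hvs, hreplace⟩ := ih (applyList_append _ _ _).symm
      refine ⟨s, hvs, fun y hy => ?_⟩
      have hd' : Deriv P (applyList (subst θ r.rhs) (l ++ y :: ws)) t := by
        rw [applyList_append]
        exact hreplace y hy
      simpa [applyList_append] using opr hr hθ hds hd'
    · -- `v` is matched against a pattern of the rule
      obtain ⟨s, hvs, hreplace⟩ := hds.exists_rel_replace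
      exact ⟨s, hvs, fun y hy => by
        simpa [applyList_append] using opr hr hθ (hreplace y hy) hd⟩

end Deriv

theorem deriv_applyList_iff {P : Program σ} (hP : ∀ r ∈ P, r.lhs.length = σ.arityF r.fn)
    {e t : Exp σ} {es : List (Exp σ)} :
    Deriv P (applyList e es) t ↔
      ∃ ts, List.Forall₂ (Deriv P) es ts ∧ Deriv P (applyList e ts) t := by
  induction es generalizing e with
  | nil => simp
  | cons a es ih =>
    constructor
    · intro h
      obtain ⟨ts, hts, hd⟩ := ih.1 h
      obtain ⟨s, has, hreplace⟩ := Deriv.exists_arg_approx (u := e) (ws := ts) hd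
      exact ⟨s :: ts, .cons has hts, hreplace s (.refl has.isPPat)⟩
    · rintro ⟨_, hF, hd⟩
      obtain ⟨s, ts, has, hts, rfl⟩ := List.forall₂_cons_left_iff.1 hF
      obtain ⟨s', hss', hreplace⟩ := Deriv.exists_arg_approx hd
      exact ih.2 ⟨ts, hts, hreplace a (has.trans hP hss')⟩

theorem mem_den_iff {P : Program σ} {e t : Exp σ} : t ∈ den P e ↔ Deriv P e t :=
  ⟨And.right, fun h => ⟨h.isPPat, h⟩⟩

/-- **Proposition 1(iii)**: `e ∼ₙ e'` iff `⟦e⟧_{ext_n} = ⟦e'⟧_{ext_n}`. -/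
theorem extEquiv_iff_extSem (σ : Sig) (P : Program σ) (hP : WFProg P)
    (e e' : Exp σ) (n : ℕ) :
    ExtEquiv P n e e' ↔ extSem P n e = extSem P n e' := by
  have hP' : ∀ r ∈ P, r.lhs.length = σ.arityF r.fn := fun r hr => (hP r hr).1.1
  refine ⟨fun h => funext fun ts => h ts.1 ts.2.1, fun h es hes => Set.ext fun t => ?_⟩
  rw [mem_den_iff, mem_den_iff, deriv_applyList_iff hP', deriv_applyList_iff hP']
  refine exists_congr fun ts => and_congr_right fun hts => ?_
  have hts_pat : ∀ s ∈ ts, IsPPat s := hts.forall_mem_right fun _ _ hd => hd.isPPat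
  have hden := congrFun h ⟨ts, hts.length_eq.symm.trans hes, hts_pat⟩
  simpa only [extSem, mem_den_iff] using Set.ext_iff.1 hden t
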